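/- arXiv:quant-ph/9907019 — 3 statements merged into one kernel-verified Lean document; each statement's English description precedes it below -/
import Mathlib

section
/- Let M be a finite set of cardinality M ≥ 1, let λ ∈ (0,1), and let ε > 0 be such that λ · log₂(1/ε − 1) > 2. Then there exist at least N ≥ (1/M)·2^⌊εM⌋ distinct subsets A₁,…,A_N of M, each of cardinality ⌊εM⌋, such that |A_i ∩ A_j| < λ·⌊εM⌋ for all i ≠ j. -/
/-!
Let `k = ⌊εM⌋` and `t = ⌈λk⌉`, and take a maximal family `F` of `k`-subsets with pairwise
intersections smaller than `t`. By maximality every `k`-subset meets some member of `F` in at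
least `t` points, and each member has at most `C(k,t)·C(M-t,k-t)` such neighbours, so
`C(M,k) ≤ |F|·C(k,t)·C(M-t,k-t)`. Since `C(M,k)·C(k,t) = C(M,t)·C(M-t,k-t)` and
`C(M,t)/C(k,t) ≥ (M/k)^t`, this gives `|F|·2^k ≥ (M/k)^t ≥ ε^(-λk) ≥ 4^k`, the last step
being `λ·log₂(1/ε - 1) > 2`.
-/

open Finset

namespace Finset

variable {α : Type*} [DecidableEq α] [Fintype α]

lemma card_filter_superset_powersetCard_le (S : Finset α) (k : ℕ) :
    #{B ∈ powersetCard k (univ : Finset α) | S ⊆ B}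
      ≤ (Fintype.card α - #S).choose (k - #S) := by
  have hsub : {B ∈ powersetCard k (univ : Finset α) | S ⊆ B}
      ⊆ (powersetCard (k - #S) Sᶜ).image (S ∪ ·) := by
    intro B hB
    obtain ⟨hBk, hSB⟩ := mem_filter.1 hB
    refine mem_image.2 ⟨B \ S, mem_powersetCard.2 ⟨?_, ?_⟩, union_sdiff_of_subset hSB⟩
    · exact fun x hx => mem_compl.2 (mem_sdiff.1 hx).2
    · rw [card_sdiff_of_subset hSB, (mem_powersetCard.1 hBk).2]
  calc #{B ∈ powersetCard k (univ : Finset α) | S ⊆ B}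
      ≤ #((powersetCard (k - #S) Sᶜ).image (S ∪ ·)) := card_le_card hsub
    _ ≤ #(powersetCard (k - #S) Sᶜ) := card_image_le
    _ = (Fintype.card α - #S).choose (k - #S) := by rw [card_powersetCard, card_compl]

lemma card_filter_le_card_inter_le {A : Finset α} {k : ℕ} (hA : #A = k) (t : ℕ) :
    #{B ∈ powersetCard k (univ : Finset α) | t ≤ #(A ∩ B)}
      ≤ k.choose t * (Fintype.card α - t).choose (k - t) := by
  have hsub : {B ∈ powersetCard k (univ : Finset α) | t ≤ #(A ∩ B)}
      ⊆ (powersetCard t A).biUnion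
          fun S => {B ∈ powersetCard k (univ : Finset α) | S ⊆ B} := by
    intro B hB
    obtain ⟨hBk, hAB⟩ := mem_filter.1 hB
    obtain ⟨S, hS, hSt⟩ := exists_subset_card_eq hAB
    exact mem_biUnion.2 ⟨S, mem_powersetCard.2 ⟨hS.trans inter_subset_left, hSt⟩,
      mem_filter.2 ⟨hBk, hS.trans inter_subset_right⟩⟩
  calc #{B ∈ powersetCard k (univ : Finset α) | t ≤ #(A ∩ B)}
      ≤ ∑ S ∈ powersetCard t A, #{B ∈ powersetCard k (univ : Finset α) | S ⊆ B} :=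
        (card_le_card hsub).trans card_biUnion_le
    _ ≤ ∑ S ∈ powersetCard t A, (Fintype.card α - t).choose (k - t) := by
        refine sum_le_sum fun S hS => ?_
        rw [← (mem_powersetCard.1 hS).2]
        exact card_filter_superset_powersetCard_le S k
    _ = k.choose t * (Fintype.card α - t).choose (k - t) := by
        rw [sum_const, card_powersetCard, hA, smul_eq_mul]

lemma exists_maximal_pairwise_card_inter_lt {k t : ℕ} (htk : t ≤ k) :
    ∃ F ⊆ powersetCard k (univ : Finset α),
      (F : Set (Finset α)).Pairwise (fun A B => #(A ∩ B) < t) ∧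
      ∀ B ∈ powersetCard k (univ : Finset α), ∃ A ∈ F, t ≤ #(A ∩ B) := by
  classical
  obtain ⟨F, hFmem, hFmax⟩ := exists_maximal
    (s := (powersetCard k (univ : Finset α)).powerset.filter fun F : Finset (Finset α) =>
      (F : Set (Finset α)).Pairwise (fun A B => #(A ∩ B) < t))
    ⟨∅, by simp⟩
  simp only [mem_filter, mem_powerset] at hFmem hFmax
  obtain ⟨hF, hFsep⟩ := hFmem
  refine ⟨F, hF, hFsep, fun B hB => ?_⟩
  by_contra! hfar
  have hBF : B ∉ F := fun hBF => by
    have := hfar B hBF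
    rw [inter_self, (mem_powersetCard.1 hB).2] at this
    omega
  have hins : insert B F ⊆ F := hFmax ⟨insert_subset hB hF, by
    rw [coe_insert, Set.pairwise_insert]
    exact ⟨hFsep, fun A hA _ => ⟨inter_comm A B ▸ hfar A hA, hfar A hA⟩⟩⟩
    (subset_insert B F)
  exact hBF (hins (mem_insert_self B F))

lemma choose_le_card_mul_of_covering {F : Finset (Finset α)} {k t : ℕ}
    (hF : F ⊆ powersetCard k univ)
    (hcover : ∀ B ∈ powersetCard k (univ : Finset α), ∃ A ∈ F, t ≤ #(A ∩ B)) :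
    (Fintype.card α).choose k ≤ #F * (k.choose t * (Fintype.card α - t).choose (k - t)) := by
  have hsub : powersetCard k univ
      ⊆ F.biUnion fun A => {B ∈ powersetCard k (univ : Finset α) | t ≤ #(A ∩ B)} := by
    intro B hB
    obtain ⟨A, hA, hAB⟩ := hcover B hB
    exact mem_biUnion.2 ⟨A, hA, mem_filter.2 ⟨hB, hAB⟩⟩
  calc (Fintype.card α).choose k = #(powersetCard k (univ : Finset α)) := by
        rw [card_powersetCard, card_univ]
    _ ≤ ∑ A ∈ F, #{B ∈ powersetCard k (univ : Finset α) | t ≤ #(A ∩ B)} :=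
        (card_le_card hsub).trans card_biUnion_le
    _ ≤ ∑ _A ∈ F, k.choose t * (Fintype.card α - t).choose (k - t) :=
        sum_le_sum fun A hA => card_filter_le_card_inter_le (mem_powersetCard.1 (hF hA)).2 t
    _ = #F * (k.choose t * (Fintype.card α - t).choose (k - t)) := by
        rw [sum_const, smul_eq_mul]

end Finset

namespace Nat

lemma mul_sub_le_mul_sub_of_le {k M : ℕ} (hkM : k ≤ M) (t : ℕ) :
    M * (k - t) ≤ k * (M - t) := by
  rcases le_total t k with htk | hkt
  · zify [htk, htk.trans hkM]
    nlinarith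
  · simp [Nat.sub_eq_zero_of_le hkt]

lemma pow_mul_choose_le_pow_mul_choose {k M : ℕ} (hkM : k ≤ M) (t : ℕ) :
    M ^ t * k.choose t ≤ k ^ t * M.choose t := by
  induction t with
  | zero => simp
  | succ t ih =>
    refine Nat.le_of_mul_le_mul_right ?_ t.succ_pos
    calc M ^ (t + 1) * k.choose (t + 1) * (t + 1) = M * (k - t) * (M ^ t * k.choose t) := by
          rw [mul_assoc, choose_succ_right_eq]; ring
      _ ≤ k * (M - t) * (k ^ t * M.choose t) :=
          Nat.mul_le_mul (mul_sub_le_mul_sub_of_le hkM t) ih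
      _ = k ^ (t + 1) * M.choose (t + 1) * (t + 1) := by
          rw [mul_assoc _ (M.choose _), choose_succ_right_eq]; ring

lemma pow_le_mul_choose_mul_pow {M N k t : ℕ} (htk : t ≤ k) (hkM : k ≤ M)
    (h : M.choose k ≤ N * (k.choose t * (M - t).choose (k - t))) :
    M ^ t ≤ N * k.choose t * k ^ t := by
  have hchoose : M.choose t ≤ N * k.choose t * k.choose t := by
    refine Nat.le_of_mul_le_mul_right ?_ (choose_pos (Nat.sub_le_sub_right hkM t))
    calc M.choose t * (M - t).choose (k - t) = M.choose k * k.choose t := (choose_mul htk).symm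
      _ ≤ N * (k.choose t * (M - t).choose (k - t)) * k.choose t := Nat.mul_le_mul_right _ h
      _ = N * k.choose t * k.choose t * (M - t).choose (k - t) := by ring
  refine Nat.le_of_mul_le_mul_right ?_ (choose_pos htk)
  calc M ^ t * k.choose t ≤ k ^ t * M.choose t := pow_mul_choose_le_pow_mul_choose hkM t
    _ ≤ k ^ t * (N * k.choose t * k.choose t) := Nat.mul_le_mul_left _ hchoose
    _ = N * k.choose t * k ^ t * k.choose t := by ring

lemma two_pow_le_of_four_pow_mul_pow_le {N k t : ℕ} (htk : t ≤ k)
    (h : 4 ^ k * k ^ t ≤ N * k.choose t * k ^ t) : 2 ^ k ≤ N := by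
  have hkt : 0 < 2 ^ k * k ^ t := by
    rcases k.eq_zero_or_pos with hk | hk
    · simp [Nat.le_zero.1 (hk ▸ htk)]
    · positivity
  refine Nat.le_of_mul_le_mul_right ?_ hkt
  calc 2 ^ k * (2 ^ k * k ^ t) = 4 ^ k * k ^ t := by rw [← mul_assoc, ← mul_pow]; norm_num
    _ ≤ N * k.choose t * k ^ t := h
    _ ≤ N * (2 ^ k * k ^ t) := by
        rw [mul_assoc]
        gcongr
        exact choose_le_two_pow k t

end Nat

lemma pos_of_neg_one_lt_of_logb_pos {x : ℝ} (hx : -1 < x) (h : 0 < Real.logb 2 x) : 0 < x := by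
  by_contra! hx0
  have hlog : Real.log x ≤ 0 := by
    rw [← Real.log_abs]
    exact Real.log_nonpos (abs_nonneg x) (abs_le.2 ⟨by linarith, by linarith⟩)
  exact h.not_ge (div_nonpos_of_nonpos_of_nonneg hlog (Real.log_nonneg one_le_two))

lemma four_pow_le_rpow_of_two_le_mul_logb {x lam : ℝ} (hx : 0 < x)
    (h : 2 ≤ lam * Real.logb 2 x) (k : ℕ) : (4 : ℝ) ^ k ≤ x ^ (lam * k) := by
  calc (4 : ℝ) ^ k = 2 ^ (2 * k : ℝ) := by
        rw [Real.rpow_mul zero_le_two, Real.rpow_natCast]; norm_num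
    _ ≤ 2 ^ (Real.logb 2 x * (lam * k)) :=
        Real.rpow_le_rpow_of_exponent_le one_le_two
          (by nlinarith [mul_le_mul_of_nonneg_right h (Nat.cast_nonneg (α := ℝ) k)])
    _ = x ^ (lam * k) := by
        rw [Real.rpow_mul zero_le_two, Real.rpow_logb zero_lt_two (by norm_num) hx]

lemma four_pow_mul_pow_le {M k t : ℕ} {ε lam : ℝ} (hε : 0 < ε) (hx : 0 < 1 / ε - 1)
    (hlam : 0 ≤ lam) (h : 2 ≤ lam * Real.logb 2 (1 / ε - 1)) (hk : k ≤ ε * M)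
    (ht : lam * k ≤ t) : (4 : ℝ) ^ k * k ^ t ≤ M ^ t := by
  have hε1 : 1 ≤ 1 / ε := by linarith
  calc (4 : ℝ) ^ k * k ^ t ≤ (1 / ε - 1) ^ (lam * k) * k ^ t := by
        gcongr
        exact four_pow_le_rpow_of_two_le_mul_logb hx h k
    _ ≤ (1 / ε) ^ (lam * k) * k ^ t := by
        gcongr
        linarith
    _ ≤ (1 / ε) ^ (t : ℝ) * k ^ t := by
        gcongr
    _ = (k / ε) ^ t := by rw [Real.rpow_natCast, div_pow, div_pow, one_pow]; ring
    _ ≤ M ^ t := by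
        gcongr
        rwa [div_le_iff₀ hε, mul_comm]

theorem packing_lemma_general (M : ℕ) (lam ε : ℝ)
    (hlam : lam ∈ Set.Ioo (0 : ℝ) 1) (hε : 0 < ε)
    (h : 2 < lam * Real.logb 2 (1 / ε - 1)) :
    ∃ (N : ℕ) (A : Fin N → Finset (Fin M)),
      (1 / (M : ℝ)) * 2 ^ ⌊ε * M⌋₊ ≤ (N : ℝ) ∧
      Function.Injective A ∧
      (∀ i, (A i).card = ⌊ε * M⌋₊) ∧
      (∀ i j, i ≠ j → ((A i ∩ A j).card : ℝ) < lam * (⌊ε * M⌋₊ : ℝ)) := by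
  obtain ⟨hlam0, hlam1⟩ := hlam
  set k := ⌊ε * M⌋₊
  set t := ⌈lam * k⌉₊
  have hx : 0 < 1 / ε - 1 := pos_of_neg_one_lt_of_logb_pos (by linarith [one_div_pos.2 hε])
    (pos_of_mul_pos_right (two_pos.trans h) hlam0.le)
  have hkM : k ≤ M := Nat.floor_le_of_le <| mul_le_of_le_one_left (Nat.cast_nonneg M) <| by
    rw [lt_sub_iff_add_lt, lt_div_iff₀ hε] at hx
    linarith
  have htk : t ≤ k := Nat.ceil_le.2 <| mul_le_of_le_one_left (Nat.cast_nonneg k) hlam1.le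
  obtain ⟨F, hF, hFsep, hcover⟩ := exists_maximal_pairwise_card_inter_lt (α := Fin M) htk
  have hcount := choose_le_card_mul_of_covering hF hcover
  rw [Fintype.card_fin] at hcount
  have h4 : 4 ^ k * k ^ t ≤ M ^ t := by
    exact_mod_cast four_pow_mul_pow_le hε hx hlam0.le h.le
      (Nat.floor_le (by positivity)) (Nat.le_ceil _)
  have hN : 2 ^ k ≤ #F := Nat.two_pow_le_of_four_pow_mul_pow_le htk
    (h4.trans (Nat.pow_le_mul_choose_mul_pow htk hkM hcount))
  let A : Fin #F → Finset (Fin M) := fun i => F.equivFin.symm i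
  have hAinj : Function.Injective A := Subtype.val_injective.comp F.equivFin.symm.injective
  refine ⟨#F, A, ?_, hAinj, fun i => (mem_powersetCard.1 (hF (F.equivFin.symm i).2)).2,
    fun i j hij => Nat.lt_ceil.1 <| hFsep (F.equivFin.symm i).2 (F.equivFin.symm j).2 <|
      hAinj.ne hij⟩
  calc 1 / (M : ℝ) * 2 ^ k ≤ 2 ^ k :=
        mul_le_of_le_one_left (by positivity) (one_div (M : ℝ) ▸ Nat.cast_inv_le_one M)
    _ ≤ #F := by exact_mod_cast hN

/-- Gilbert-type packing lemma: there exist at least `(1/M)·2^⌊εM⌋` distinct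
subsets of a ground set of size `M`, each of cardinality `⌊εM⌋`, with pairwise
intersections of cardinality less than `λ·⌊εM⌋`. -/
theorem packing_lemma (M : ℕ) (hM : 1 ≤ M) (lam ε : ℝ)
    (hlam : lam ∈ Set.Ioo (0 : ℝ) 1) (hε : 0 < ε)
    (h : 2 < lam * Real.logb 2 (1 / ε - 1)) :
    ∃ (N : ℕ) (A : Fin N → Finset (Fin M)),
      (1 / (M : ℝ)) * 2 ^ ⌊ε * M⌋₊ ≤ (N : ℝ) ∧
      Function.Injective A ∧
      (∀ i, (A i).card = ⌊ε * M⌋₊) ∧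
      (∀ i j, i ≠ j → ((A i ∩ A j).card : ℝ) < lam * (⌊ε * M⌋₊ : ℝ)) :=
  packing_lemma_general M lam ε hlam hε h
end

section
/- Let Q and R be probability distributions on a finite set B with R(x) > 0 for all x. Then for every μ > 0, d₁(Q,R) ≤ (2/log₂ e)·μ + 2·Q[{x : log₂(Q(x)/R(x)) > μ}], where d₁(Q,R) = ∑_{x∈B} |Q(x) − R(x)|. -/
/-!
Since `∑ Q = ∑ R`, the distance `d₁(Q, R)` is twice the total positive part `∑ (Q - R)⁺`.
On the set `S` where `log₂ (Q / R) > μ`, the positive part is at most `Q`. Off `S` we have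
`R ≥ 2^(-μ) Q`, hence `(Q - R)⁺ ≤ (1 - 2^(-μ)) Q ≤ μ ln 2 · Q`, and these terms add up to at
most `μ ln 2 = μ / log₂ e`.
-/

open Finset Real

theorem sum_abs_sub_eq_two_mul_sum_posPart {ι : Type*} (s : Finset ι) (f g : ι → ℝ)
    (h : ∑ i ∈ s, f i = ∑ i ∈ s, g i) :
    ∑ i ∈ s, |f i - g i| = 2 * ∑ i ∈ s, (f i - g i)⁺ := by
  have habs (a : ℝ) : |a| = 2 * a⁺ - a := by
    rw [← posPart_add_negPart]
    linarith [posPart_sub_negPart a]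
  rw [sum_congr rfl fun i _ => habs (f i - g i), sum_sub_distrib, sum_sub_distrib, ← mul_sum, h]
  ring

theorem one_sub_rpow_neg_le_mul_log {b : ℝ} (hb : 0 < b) (t : ℝ) :
    1 - b ^ (-t) ≤ t * log b := by
  rw [rpow_def_of_pos hb, mul_neg, mul_comm]
  linarith [one_sub_le_exp_neg (t * log b)]

theorem sub_le_mul_mul_log_of_logb_div_le {b q r t : ℝ} (hb : 1 < b) (hq : 0 ≤ q) (hr : 0 < r)
    (h : logb b (q / r) ≤ t) : q - r ≤ q * (t * log b) := by
  obtain rfl | hq := hq.eq_or_lt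
  · simpa using hr.le
  have hqr : q * b ^ (-t) ≤ r := by
    rw [rpow_neg (by linarith), ← div_eq_mul_inv, div_le_iff₀ (by positivity), mul_comm,
      ← div_le_iff₀ hr]
    exact (logb_le_iff_le_rpow hb (div_pos hq hr)).1 h
  nlinarith [one_sub_rpow_neg_le_mul_log (zero_lt_one.trans hb) t]

open Classical in
/-- For probability distributions `Q, R` on a finite set `B` with `R > 0`,
`d₁(Q,R) ≤ (2/log₂ e)·μ + 2·Q[{x : log₂(Q(x)/R(x)) > μ}]` for every `μ > 0`. -/
theorem variational_distance_le {B : Type*} [Fintype B]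
    (Q R : B → ℝ) (hQ0 : ∀ x, 0 ≤ Q x) (hQ1 : ∑ x, Q x = 1)
    (hR0 : ∀ x, 0 < R x) (hR1 : ∑ x, R x = 1) (μ : ℝ) (hμ : 0 < μ) :
    ∑ x, |Q x - R x| ≤
      (2 / Real.logb 2 (Real.exp 1)) * μ +
        2 * ∑ x ∈ Finset.univ.filter (fun x => μ < Real.logb 2 (Q x / R x)), Q x := by
  set p : B → Prop := fun x => μ < logb 2 (Q x / R x)
  have hcoef : 2 / logb 2 (exp 1) = 2 * log 2 := by
    rw [logb, log_exp]
    field_simp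
  have hlarge : ∑ x ∈ univ.filter p, (Q x - R x)⁺ ≤ ∑ x ∈ univ.filter p, Q x :=
    sum_le_sum fun x _ => sup_le (by linarith [hR0 x]) (hQ0 x)
  have hsmall : ∑ x ∈ univ.filter (¬ p ·), (Q x - R x)⁺ ≤ μ * log 2 := calc
    _ ≤ ∑ x ∈ univ.filter (¬ p ·), Q x * (μ * log 2) := by
      refine sum_le_sum fun x hx => sup_le ?_ (mul_nonneg (hQ0 x) (by positivity))
      exact sub_le_mul_mul_log_of_logb_div_le one_lt_two (hQ0 x) (hR0 x)
        (not_lt.1 (mem_filter.1 hx).2)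
    _ = (∑ x ∈ univ.filter (¬ p ·), Q x) * (μ * log 2) := (sum_mul ..).symm
    _ ≤ 1 * (μ * log 2) := by
      gcongr
      exact hQ1 ▸ sum_le_univ_sum_of_nonneg hQ0
    _ = μ * log 2 := one_mul _
  rw [sum_abs_sub_eq_two_mul_sum_posPart _ _ _ (hQ1.trans hR1.symm), hcoef,
    ← sum_filter_add_sum_filter_not univ p]
  linarith
end

section
/- Let W : A → (Fin b → ℝ≥0) be a map from a finite set A to sub-probability assignments on Fin b with ∑_y W(x)(y) ≤ 1 and each W(x)(y) ≥ 0. Let C₁,…,C_N be subsets of a finite index set M = {1,…,M}, each of size s ≥ 1, with |C_i ∩ C_j| < λs for i ≠ j, where 0 < λ. Suppose codewords (c_m)_{m∈M} ∈ A^M and a family of nonnegative operators is abstracted as: for each m, a value e(x, m) ∈ [0,1] with ∑_m e(x,m) ≤ 1 for each x, and e(c_m, m) ≥ 1 − λ. Define P_i as the uniform distribution on {c_m : m ∈ C_i} and D_i-probability of P_j as (1/s)∑_{m∈C_i}∑_{m'∈C_j} e(c_{m'}, m). Then for i ≠ j, (1/s)∑_{m∈C_j}∑_{m'∈C_i} e(c_{m'},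 m) ≤ 2λ. -/
/-!
Split the false-identification sum over the codewords `m' ∈ C i` according to whether `m' ∈ C j`.
A codeword in the overlap contributes at most its total mass `1`, and there are fewer than `λs`
of them. A codeword outside `C j` already puts mass at least `1 - λ` on its own index `m' ∉ C j`,
so it leaves at most `λ` for `C j`, and there are at most `s` of them.
-/

open Finset

section SubStochastic

variable {ι : Type*} [Fintype ι] {f : ι → ℝ}

theorem sum_le_of_notMem_of_le_apply (hf : ∀ i, 0 ≤ f i) (hsum : ∑ i, f i ≤ 1) {lam : ℝ} {a : ι}
    (ha : 1 - lam ≤ f a) {S : Finset ι} (haS : a ∉ S) : ∑ i ∈ S, f i ≤ lam := by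
  classical
  have : f a + ∑ i ∈ S, f i ≤ 1 :=
    calc f a + ∑ i ∈ S, f i = ∑ i ∈ insert a S, f i := (sum_insert haS).symm
      _ ≤ ∑ i, f i := sum_le_univ_sum_of_nonneg hf
      _ ≤ 1 := hsum
  linarith

theorem sum_le_one_of_univ_sum_le_one (hf : ∀ i, 0 ≤ f i) (hsum : ∑ i, f i ≤ 1) (S : Finset ι) :
    ∑ i ∈ S, f i ≤ 1 :=
  (sum_le_univ_sum_of_nonneg hf).trans hsum

variable [DecidableEq ι] {g : ι → ι → ℝ}

theorem sum_sum_le_card_inter_add_card_sdiff_mul (hg : ∀ i j, 0 ≤ g i j)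
    (hsum : ∀ i, ∑ j, g i j ≤ 1) {lam : ℝ} (hdiag : ∀ i, 1 - lam ≤ g i i) (T S : Finset ι) :
    ∑ i ∈ T, ∑ j ∈ S, g i j ≤ #(T ∩ S) + #(T \ S) * lam := by
  rw [← sum_inter_add_sum_sdiff T S]
  gcongr
  · calc ∑ i ∈ T ∩ S, ∑ j ∈ S, g i j ≤ ∑ _i ∈ T ∩ S, (1 : ℝ) :=
          sum_le_sum fun i _ => sum_le_one_of_univ_sum_le_one (hg i) (hsum i) S
      _ = #(T ∩ S) := by simp
  · calc ∑ i ∈ T \ S, ∑ j ∈ S, g i j ≤ ∑ _i ∈ T \ S, lam :=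
          sum_le_sum fun i hi =>
            sum_le_of_notMem_of_le_apply (hg i) (hsum i) (hdiag i) (mem_sdiff.mp hi).2
      _ = #(T \ S) * lam := by simp

end SubStochastic

theorem cross_error_bound_general {A : Type*} (Mc N : ℕ)
    (C : Fin N → Finset (Fin Mc)) (s : ℕ) (hs : 1 ≤ s)
    (hcard : ∀ i, (C i).card = s)
    (lam : ℝ) (hlam : 0 < lam)
    (hint : ∀ i j, i ≠ j → ((C i ∩ C j).card : ℝ) < lam * s)
    (c : Fin Mc → A) (e : A → Fin Mc → ℝ)
    (he0 : ∀ x m, 0 ≤ e x m)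
    (hsum : ∀ x, ∑ m, e x m ≤ 1)
    (hgood : ∀ m, 1 - lam ≤ e (c m) m) :
    ∀ i j, i ≠ j →
      (1 / (s : ℝ)) * ∑ m ∈ C j, ∑ m' ∈ C i, e (c m') m ≤ 2 * lam := by
  intro i j hij
  have hs_pos : (0 : ℝ) < s := by exact_mod_cast hs
  have hsplit := sum_sum_le_card_inter_add_card_sdiff_mul (g := fun m' m => e (c m') m)
    (fun _ _ => he0 _ _) (fun _ => hsum _) hgood (C i) (C j)
  have hsdiff : (#(C i \ C j) : ℝ) * lam ≤ s * lam := by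
    gcongr
    exact hcard i ▸ card_le_card sdiff_subset
  rw [sum_comm, one_div, inv_mul_le_iff₀ hs_pos]
  linarith [hint i j hij]

/-- Cross-error bound in the direct part of the simultaneous Q-ID coding theorem:
with code sets of pairwise intersection less than `λs` and a measurement with
success probability at least `1−λ` on correct codewords, the probability of
false identification is at most `2λ`. -/
theorem cross_error_bound {A : Type*} [Fintype A] (Mc N : ℕ)
    (C : Fin N → Finset (Fin Mc)) (s : ℕ) (hs : 1 ≤ s)
    (hcard : ∀ i, (C i).card = s)
    (lam : ℝ) (hlam : 0 < lam)
    (hint : ∀ i j, i ≠ j → ((C i ∩ C j).card : ℝ) < lam * s)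
    (c : Fin Mc → A) (e : A → Fin Mc → ℝ)
    (he0 : ∀ x m, 0 ≤ e x m) (he1 : ∀ x m, e x m ≤ 1)
    (hsum : ∀ x, ∑ m, e x m ≤ 1)
    (hgood : ∀ m, 1 - lam ≤ e (c m) m) :
    ∀ i j, i ≠ j →
      (1 / (s : ℝ)) * ∑ m ∈ C j, ∑ m' ∈ C i, e (c m') m ≤ 2 * lam :=
  cross_error_bound_general Mc N C s hs hcard lam hlam hint c e he0 hsum hgood
end
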